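/- If μ = (a_1, a_2, ..., a_k) with k ≥ 2 is a unique-path partition of n, then μ* = (a_2, ..., a_k) is a unique-path partition of n - a_1. -/

import Mathlib

/-- The beta-set (set of first-column hook lengths) of a partition given as a
weakly decreasing list of parts: the `i`-th part `a` contributes `a + (ℓ - 1 - i)`. -/
def betaSet (l : List ℕ) : Finset ℕ :=
  (l.mapIdx (fun i a => a + (l.length - 1 - i))).toFinset

/-- The leg length of the `a`-hook removed from the partition with beta-set `X`
by replacing the beta-number `x` with `x - a`: the number of beta-numbers
strictly between `x - a` and `x`. -/
def legLen (X : Finset ℕ) (a x : ℕ) : ℕ :=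
  (X.filter (fun y => x - a < y ∧ y < x)).card

/-- For a partition with beta-set `X` and a list `l = [a₁,…,a_k]`, the multiset of
the sums of leg lengths of the hooks removed along all `l`-paths of `X`, i.e. along
all ways of successively removing an `a₁`-hook, an `a₂`-hook, … ending at the
empty partition.  Removing an `a`-hook from a partition with beta-set `X`
corresponds to replacing some `x ∈ X` with `x - a ∉ X` (where `a ≤ x`). -/
def legSums : Finset ℕ → List ℕ → Multiset ℕ
  | X, [] => if X = Finset.range X.card then {0} else 0
  | X, a :: r =>
      (X.filter (fun x => a ≤ x ∧ x - a ∉ X)).val.bind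
        (fun x => (legSums (insert (x - a) (X.erase x)) r).map (fun L => legLen X a x + L))

/-- The number of `l`-paths in the partition with beta-set `X`:
the number of ways to successively remove hooks of lengths `a₁, a₂, …`
(for `l = [a₁,…,a_k]`) ending at the empty partition. -/
def numPaths (X : Finset ℕ) (l : List ℕ) : ℕ := (legSums X l).card

/-- Murnaghan–Nakayama evaluation: for partitions `lam`, `mu` given as weakly
decreasing lists, this is `Σ_paths (-1)^(sum of leg lengths)`, which by the
Murnaghan–Nakayama formula equals the value `χ^lam(mu)` of the irreducible
character of the symmetric group indexed by `lam` on the class of cycle type `mu`. -/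
def charList (lam mu : List ℕ) : ℤ :=
  ((legSums (betaSet lam) mu).map (fun L => (-1 : ℤ) ^ L)).sum

/-- The parts of a partition as a weakly decreasing list. -/
def sortedParts {n : ℕ} (mu : n.Partition) : List ℕ :=
  (mu.parts.sort (· ≤ ·)).reverse

/-- The value `χ^lam(mu)` of the irreducible character of `S_n` indexed by the
partition `lam` on the conjugacy class of cycle type `mu`, computed by the
Murnaghan–Nakayama formula. -/
def charValue {n : ℕ} (lam mu : n.Partition) : ℤ :=
  charList (sortedParts lam) (sortedParts mu)

/-!
Given `λ ⊢ n - a₁`, lengthen its first row by `a₁` to get `Λ ⊢ n`. Removing the `a₁`-hook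
of `Λ` that ends in its first row (the top bead `b + a₁ + ℓ` slides down to the free position
`b + ℓ`) gives back `λ`, so every `μ*`-path of `λ` extends to a distinct `μ`-path of `Λ`.
The empty partition has at most one path of any kind.
-/

lemma betaSet_cons (c : ℕ) (t : List ℕ) :
    betaSet (c :: t) = insert (c + t.length) (betaSet t) := by
  unfold betaSet
  rw [List.mapIdx_cons, List.toFinset_cons]
  congr 2
  simp [Nat.sub_sub, Nat.add_comm]

lemma lt_of_mem_betaSet {b : ℕ} {t : List ℕ} (hbt : ∀ y ∈ t, y ≤ b) {z : ℕ}
    (hz : z ∈ betaSet t) : z < b + t.length := by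
  unfold betaSet at hz
  rw [List.mem_toFinset, List.mem_iff_getElem] at hz
  obtain ⟨i, hi, rfl⟩ := hz
  rw [List.getElem_mapIdx]
  have hlen : i < t.length := by simpa using hi
  have := hbt t[i] (List.getElem_mem _)
  omega

lemma numPaths_empty_le_one (l : List ℕ) : numPaths ∅ l ≤ 1 := by
  cases l <;> simp [numPaths, legSums]

lemma numPaths_removeHook_le {X : Finset ℕ} {a x : ℕ} (r : List ℕ)
    (hx : x ∈ X) (hax : a ≤ x) (hfree : x - a ∉ X) :
    numPaths (insert (x - a) (X.erase x)) r ≤ numPaths X (a :: r) := by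
  have hmem : x ∈ (X.filter (fun x => a ≤ x ∧ x - a ∉ X)).val := by
    simp [hx, hax, hfree]
  unfold numPaths
  rw [legSums, Multiset.card_bind]
  refine Multiset.single_le_sum (fun _ _ => Nat.zero_le _) _ ?_
  exact Multiset.mem_map.mpr ⟨x, hmem, by simp⟩

lemma numPaths_betaSet_cons_le {a b : ℕ} {t : List ℕ} (r : List ℕ) (ha : 0 < a)
    (hbt : ∀ y ∈ t, y ≤ b) :
    numPaths (betaSet (b :: t)) r ≤ numPaths (betaSet ((b + a) :: t)) (a :: r) := by
  have hlt : ∀ z ∈ betaSet t, z < b + t.length := fun _ => lt_of_mem_betaSet hbt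
  have htop : b + a + t.length ∉ betaSet t := fun h => by have := hlt _ h; omega
  have hslide : b + a + t.length - a = b + t.length := by omega
  have hfree : b + t.length ∉ insert (b + a + t.length) (betaSet t) := by
    rw [Finset.mem_insert, not_or]
    exact ⟨by omega, fun h => (hlt _ h).false⟩
  have key := numPaths_removeHook_le (X := insert (b + a + t.length) (betaSet t)) r
    (Finset.mem_insert_self _ _) (by omega) (hslide ▸ hfree)
  rw [hslide, Finset.erase_insert htop, ← betaSet_cons] at key
  rwa [betaSet_cons (b + a)]

lemma sortedParts_sum {m : ℕ} (p : m.Partition) : (sortedParts p).sum = m := by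
  rw [sortedParts, List.sum_reverse, ← Multiset.sum_coe, Multiset.sort_eq, p.parts_sum]

lemma mem_sortedParts {m : ℕ} (p : m.Partition) {y : ℕ} :
    y ∈ sortedParts p ↔ y ∈ p.parts := by
  rw [sortedParts, List.mem_reverse, Multiset.mem_sort]

lemma pos_of_mem_sortedParts {m : ℕ} (p : m.Partition) {y : ℕ} (hy : y ∈ sortedParts p) :
    0 < y :=
  p.parts_pos ((mem_sortedParts p).mp hy)

lemma pairwise_sortedParts {m : ℕ} (p : m.Partition) :
    (sortedParts p).Pairwise (· ≥ ·) :=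
  List.pairwise_reverse.mpr (Multiset.pairwise_sort _ _)

lemma exists_sortedParts_eq {n : ℕ} (l : List ℕ) (hl : l.Pairwise (· ≥ ·))
    (hpos : ∀ x ∈ l, 0 < x) (hsum : l.sum = n) : ∃ p : n.Partition, sortedParts p = l := by
  subst hsum
  refine ⟨⟨l, fun hi => hpos _ (Multiset.mem_coe.mp hi), Multiset.sum_coe l⟩, ?_⟩
  have hsort : (l : Multiset ℕ).sort (· ≤ ·) = l.reverse :=
    List.Perm.eq_of_pairwise' (Multiset.pairwise_sort _ _) (List.pairwise_reverse.mpr hl)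
      (by rw [← Multiset.coe_eq_coe, Multiset.sort_eq, Multiset.coe_reverse])
  rw [sortedParts, hsort, List.reverse_reverse]

lemma exists_sortedParts_eq_add_head {m n : ℕ} (lam : m.Partition) {b : ℕ} {t : List ℕ}
    (h : sortedParts lam = b :: t) (a : ℕ) (hn : m + a = n) :
    ∃ Λ : n.Partition, sortedParts Λ = (b + a) :: t := by
  have hsorted := pairwise_sortedParts lam
  have hsum := sortedParts_sum lam
  have hpos : ∀ y ∈ sortedParts lam, 0 < y := fun _ => pos_of_mem_sortedParts lam
  rw [h, List.pairwise_cons] at hsorted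
  rw [h, List.sum_cons] at hsum
  rw [h, List.forall_mem_cons] at hpos
  refine exists_sortedParts_eq _ ?_ ?_ (by rw [List.sum_cons]; omega)
  · exact List.pairwise_cons.mpr ⟨fun y hy => (hsorted.1 y hy).trans (Nat.le_add_right b a),
      hsorted.2⟩
  · exact List.forall_mem_cons.mpr ⟨by omega, hpos.2⟩

theorem unique_path_tail_general (n : ℕ) (μ : n.Partition) (a : ℕ) (r : List ℕ)
    (hμ : sortedParts μ = a :: r)
    (hup : ∀ lam : n.Partition, numPaths (betaSet (sortedParts lam)) (a :: r) ≤ 1)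
    (lam : (n - a).Partition) :
    numPaths (betaSet (sortedParts lam)) r ≤ 1 := by
  have ha : 0 < a := pos_of_mem_sortedParts μ (hμ ▸ List.mem_cons_self)
  have han : a ≤ n := by
    have := sortedParts_sum μ
    rw [hμ, List.sum_cons] at this
    omega
  cases h : sortedParts lam with
  | nil => exact numPaths_empty_le_one r
  | cons b t =>
    obtain ⟨Λ, hΛ⟩ := exists_sortedParts_eq_add_head lam h a (Nat.sub_add_cancel han)
    have hbt : ∀ y ∈ t, y ≤ b := (List.pairwise_cons.mp (h ▸ pairwise_sortedParts lam)).1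
    calc numPaths (betaSet (b :: t)) r
        ≤ numPaths (betaSet ((b + a) :: t)) (a :: r) := numPaths_betaSet_cons_le r ha hbt
      _ ≤ 1 := hΛ ▸ hup Λ

/-- If `μ = (a₁, a₂, …, a_k)` with `k ≥ 2` is a unique-path partition of `n`,
then `μ* = (a₂, …, a_k)` is a unique-path partition of `n - a₁`. -/
theorem unique_path_tail (n : ℕ) (μ : n.Partition) (a : ℕ) (r : List ℕ)
    (hr : r ≠ []) (hμ : sortedParts μ = a :: r)
    (hup : ∀ lam : n.Partition, numPaths (betaSet (sortedParts lam)) (a :: r) ≤ 1)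
    (lam : (n - a).Partition) :
    numPaths (betaSet (sortedParts lam)) r ≤ 1 :=
  unique_path_tail_general n μ a r hμ hup lam
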